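/- arXiv:1609.04439 — 6 statements merged into one kernel-verified Lean document; each statement's English description precedes it below -/
import Mathlib

section
/- Let m, n ≥ 3 and let L' and L be regular languages (over possibly different alphabets) with quotient complexities m and n respectively. Then the quotient complexity of the product L'·L satisfies κ(L'·L) ≤ m·2^n + 2^(n-1). -/
/-- The alphabet of a language: letters occurring in some word of `L`. -/
def alphabetOf {α : Type*} (L : Language α) : Set α :=
  {a | ∃ u v : List α, u ++ [a] ++ v ∈ L}

/-- The left quotient of `L` by a word `w`. -/
def leftQuotient {α : Type*} (L : Language α) (w : List α) : Language α :=
  {x | w ++ x ∈ L}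

/-- The set of left quotients of `L` by words over the alphabet of `L`. -/
def quotientSet {α : Type*} (L : Language α) : Set (Language α) :=
  {K | ∃ w : List α, (∀ a ∈ w, a ∈ alphabetOf L) ∧ K = leftQuotient L w}

/-- `L` is regular with quotient complexity `m`: the set of its left quotients
(by words over its own alphabet) is finite of cardinality exactly `m`. -/
def HasComplexity {α : Type*} (L : Language α) (m : ℕ) : Prop :=
  (quotientSet L).Finite ∧ (quotientSet L).ncard = m

/-- All words whose letters lie in `S`. -/
def starOf {α : Type*} (S : Set α) : Language α :=
  {w | ∀ a ∈ w, a ∈ S}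

/-- A nonempty language `L` is a right ideal if `L · Σ_L^* = L`. -/
def IsRightIdeal {α : Type*} (L : Language α) : Prop :=
  (∃ w, w ∈ L) ∧ L * starOf (alphabetOf L) = L

/-- A nonempty language `L` is a left ideal if `Σ_L^* · L = L`. -/
def IsLeftIdeal {α : Type*} (L : Language α) : Prop :=
  (∃ w, w ∈ L) ∧ starOf (alphabetOf L) * L = L

/-- A nonempty language `L` is a two-sided ideal if `Σ_L^* · L · Σ_L^* = L`. -/
def IsTwoSidedIdeal {α : Type*} (L : Language α) : Prop :=
  (∃ w, w ∈ L) ∧ starOf (alphabetOf L) * L * starOf (alphabetOf L) = L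

/-!
A word `w` determines `w⁻¹(L'·L) = (w⁻¹L')·L ∪ ⋃ T`, where `T` is the set of nonempty quotients
`v⁻¹L` over the factorizations `w = u ++ v` with `u ∈ L'`. The first component `w⁻¹L'` is a quotient
of `L'` or `∅` (the latter for words leaving the alphabet of `L'`) and `T` is a set of quotients of
`L`, so there are at most `(m + 1)·2^n` such pairs. When `ε ∈ w⁻¹L'`, i.e. `w ∈ L'`, the set `T`
contains `L = ε⁻¹L`; since some quotient of a nonempty `L'` contains `ε`, this excludes at least
`2^(n-1)` pairs.
-/

open Set in
theorem Set.ncard_insert_prod_powerset_sdiff_le {β γ : Type*} {A F : Set β} {B : Set γ} (a : β)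
    {b : γ} (hA : A.Finite) (hB : B.Finite) (hFA : F ⊆ A) (hF : F.Nonempty) (hb : b ∈ B) :
    ((insert a A ×ˢ 𝒫 B) \ (F ×ˢ 𝒫 (B \ {b}))).ncard ≤
      A.ncard * 2 ^ B.ncard + 2 ^ (B.ncard - 1) := by
  have hsub : F ×ˢ 𝒫 (B \ {b}) ⊆ insert a A ×ˢ 𝒫 B :=
    prod_mono (hFA.trans (subset_insert a A)) (powerset_mono.2 sdiff_subset)
  have hF1 : 1 ≤ F.ncard := (ncard_pos (hA.subset hFA)).2 hF
  have hA1 : (insert a A).ncard ≤ A.ncard + 1 := ncard_insert_le a A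
  rw [ncard_sdiff hsub ((hA.subset hFA).prod hB.sdiff.powerset), ncard_prod, ncard_prod,
    ncard_powerset B hB, ncard_powerset _ hB.sdiff, ← ncard_sdiff_singleton_add_one hb hB,
    Nat.add_sub_cancel, pow_succ, Nat.sub_le_iff_le_add]
  nlinarith [Nat.one_le_two_pow (n := (B \ {b}).ncard)]

section Quotients

variable {α : Type*}

lemma mem_alphabetOf_of_mem {L : Language α} {w : List α} (hw : w ∈ L) {a : α} (ha : a ∈ w) :
    a ∈ alphabetOf L := by
  obtain ⟨s, t, rfl⟩ := List.append_of_mem ha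
  exact ⟨s, t, by simpa using hw⟩

@[simp]
lemma mem_leftQuotient {L : Language α} {w x : List α} : x ∈ leftQuotient L w ↔ w ++ x ∈ L :=
  Iff.rfl

lemma leftQuotient_mem_quotientSet {L : Language α} {w : List α} (h : leftQuotient L w ≠ 0) :
    leftQuotient L w ∈ quotientSet L := by
  obtain ⟨x, hx⟩ := Set.nonempty_iff_ne_empty.2 h
  exact ⟨w, fun a ha => mem_alphabetOf_of_mem (L := L) hx (List.mem_append_left x ha), rfl⟩

lemma self_mem_quotientSet {L : Language α} (hL : L ≠ 0) : L ∈ quotientSet L :=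
  leftQuotient_mem_quotientSet (w := []) hL

lemma quotientSet_subset_singleton_zero {L : Language α} (hL : L = 0) : quotientSet L ⊆ {0} := by
  rintro _ ⟨w, -, rfl⟩
  subst hL
  rfl

end Quotients

section Product

variable {α : Type*}

def suffixQuotients (L' L : Language α) (w : List α) : Set (Language α) :=
  {K | K ≠ 0 ∧ ∃ u ∈ L', ∃ v, u ++ v = w ∧ leftQuotient L v = K}

lemma suffixQuotients_subset_quotientSet (L' L : Language α) (w : List α) :
    suffixQuotients L' L w ⊆ quotientSet L := by
  rintro K ⟨hK, u, -, v, -, rfl⟩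
  exact leftQuotient_mem_quotientSet hK

lemma self_mem_suffixQuotients {L' L : Language α} (hL : L ≠ 0) {w : List α} (hw : w ∈ L') :
    L ∈ suffixQuotients L' L w :=
  ⟨hL, w, hw, [], List.append_nil w, rfl⟩

theorem leftQuotient_mul (L' L : Language α) (w : List α) :
    leftQuotient (L' * L) w = leftQuotient L' w * L + sSup (suffixQuotients L' L w) := by
  ext x
  simp only [mem_leftQuotient, Language.mem_mul, Language.mem_add]
  constructor
  · rintro ⟨u, hu, y, hy, huy⟩
    rcases List.append_eq_append_iff.1 huy with ⟨v, rfl, rfl⟩ | ⟨c, rfl, rfl⟩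
    · exact Or.inr ⟨leftQuotient L v,
        ⟨ne_of_mem_of_not_mem' hy (Language.notMem_zero x), u, hu, v, rfl, rfl⟩, hy⟩
    · exact Or.inl ⟨c, hu, y, hy, rfl⟩
  · rintro (⟨c, hc, y, hy, rfl⟩ | ⟨_, ⟨-, u, hu, v, rfl, rfl⟩, hx⟩)
    · exact ⟨w ++ c, hc, y, hy, List.append_assoc w c y⟩
    · exact ⟨u, hu, v ++ x, hx, (List.append_assoc u v x).symm⟩

def productStates (L' L : Language α) : Set (Language α × Set (Language α)) :=
  (insert 0 (quotientSet L') ×ˢ 𝒫 quotientSet L) \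
    ({q | q ∈ quotientSet L' ∧ [] ∈ q} ×ˢ 𝒫 (quotientSet L \ {L}))

lemma quotientSet_mul_subset_image_productStates {L' L : Language α} (hL : L ≠ 0) :
    quotientSet (L' * L) ⊆ (fun p => p.1 * L + sSup p.2) '' productStates L' L := by
  rintro _ ⟨w, -, rfl⟩
  refine ⟨(leftQuotient L' w, suffixQuotients L' L w),
    ⟨⟨?_, suffixQuotients_subset_quotientSet L' L w⟩, ?_⟩, (leftQuotient_mul L' L w).symm⟩
  · by_cases h : leftQuotient L' w = 0
    · exact Or.inl h
    · exact Or.inr (leftQuotient_mem_quotientSet h)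
  · rintro ⟨⟨-, hw⟩, hT⟩
    exact (hT (self_mem_suffixQuotients hL (by simpa using hw))).2 rfl

lemma productStates_finite {L' L : Language α} (hL' : (quotientSet L').Finite)
    (hL : (quotientSet L).Finite) : (productStates L' L).Finite :=
  ((hL'.insert 0).prod hL.powerset).sdiff

lemma ncard_productStates_le {L' L : Language α} (hL' : (quotientSet L').Finite)
    (hL : (quotientSet L).Finite) {u : List α} (hu : u ∈ L') (hL0 : L ≠ 0) :
    (productStates L' L).ncard ≤
      (quotientSet L').ncard * 2 ^ (quotientSet L).ncard + 2 ^ ((quotientSet L).ncard - 1) := by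
  have hu' : [] ∈ leftQuotient L' u := by simpa using hu
  exact Set.ncard_insert_prod_powerset_sdiff_le 0 hL' hL (fun q hq => hq.1)
    ⟨_, leftQuotient_mem_quotientSet (ne_of_mem_of_not_mem' hu' (Language.notMem_zero _)), hu'⟩
    (self_mem_quotientSet hL0)

end Product

theorem product_upper_bound_general {α : Type*} (m n : ℕ)
    (L' L : Language α) (hL' : HasComplexity L' m) (hL : HasComplexity L n) :
    (quotientSet (L' * L)).Finite ∧
      (quotientSet (L' * L)).ncard ≤ m * 2 ^ n + 2 ^ (n - 1) := by
  obtain ⟨hQ', rfl⟩ := hL'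
  obtain ⟨hQ, rfl⟩ := hL
  by_cases h0 : L' * L = 0
  · have hsub := quotientSet_subset_singleton_zero h0
    refine ⟨(Set.finite_singleton 0).subset hsub, ?_⟩
    calc (quotientSet (L' * L)).ncard ≤ ({0} : Set (Language α)).ncard := Set.ncard_le_ncard hsub
      _ = 1 := Set.ncard_singleton 0
      _ ≤ _ := Nat.one_le_two_pow.trans (Nat.le_add_left _ _)
  obtain ⟨x, hx⟩ := Set.nonempty_iff_ne_empty.2 h0
  obtain ⟨u, hu, y, hy, -⟩ := Language.mem_mul.1 hx
  have hL0 : L ≠ 0 := ne_of_mem_of_not_mem' hy (Language.notMem_zero y)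
  have hfin := productStates_finite hQ' hQ
  have hsub := quotientSet_mul_subset_image_productStates (L' := L') hL0
  refine ⟨(hfin.image _).subset hsub, ?_⟩
  calc (quotientSet (L' * L)).ncard ≤ ((fun p => p.1 * L + sSup p.2) '' productStates L' L).ncard :=
        Set.ncard_le_ncard hsub (hfin.image _)
    _ ≤ (productStates L' L).ncard := Set.ncard_image_le hfin
    _ ≤ _ := ncard_productStates_le hQ' hQ hu hL0

/-- unrestricted state complexity of product, upper bound. -/
theorem product_upper_bound {α : Type*} (m n : ℕ) (hm : 3 ≤ m) (hn : 3 ≤ n)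
    (L' L : Language α) (hL' : HasComplexity L' m) (hL : HasComplexity L n) :
    (quotientSet (L' * L)).Finite ∧
      (quotientSet (L' * L)).ncard ≤ m * 2 ^ n + 2 ^ (n - 1) :=
  product_upper_bound_general m n L' L hL' hL
end

section
/- Let m, n ≥ 3 and let L' and L be regular languages (over possibly different alphabets) with quotient complexities m and n respectively. Then κ(L' ∪ L) ≤ (m+1)(n+1) and κ(L' ⊕ L) ≤ (m+1)(n+1), where L' ⊕ L = (L' \ L) ∪ (L \ L') is the symmetric difference. -/
section Aux
variable {α : Type*}

lemma leftQuotient_union (M N : Language α) (w : List α) :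
    leftQuotient (M ⊔ N) w = leftQuotient M w ⊔ leftQuotient N w := rfl

lemma leftQuotient_sdiff (M N : Language α) (w : List α) :
    leftQuotient (M \ N) w = leftQuotient M w \ leftQuotient N w := rfl

lemma leftQuotient_mem_aux (M : Language α) (w : List α) :
    leftQuotient M w ∈ quotientSet M ∪ {(0 : Language α)} := by
  by_cases h : ∀ a ∈ w, a ∈ alphabetOf M
  · exact Or.inl ⟨w, h, rfl⟩
  · right
    push_neg at h
    obtain ⟨a, haw, ha⟩ := h
    simp only [Set.mem_singleton_iff]
    refine Set.eq_empty_iff_forall_notMem.mpr fun x hx => ha ?_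
    obtain ⟨s, t, rfl⟩ := List.append_of_mem haw
    exact ⟨s, t ++ x, by simpa [leftQuotient] using hx⟩

lemma key_bound {m n : ℕ} (L' L : Language α)
    (hL' : HasComplexity L' m) (hL : HasComplexity L n)
    (f : Language α → Language α → Language α)
    (hf : ∀ w, leftQuotient (f L' L) w = f (leftQuotient L' w) (leftQuotient L w)) :
    (quotientSet (f L' L)).Finite ∧
      (quotientSet (f L' L)).ncard ≤ (m + 1) * (n + 1) := by
  classical
  have hA : (quotientSet L' ∪ {(0 : Language α)}).Finite :=
    hL'.1.union (Set.finite_singleton _)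
  have hB : (quotientSet L ∪ {(0 : Language α)}).Finite :=
    hL.1.union (Set.finite_singleton _)
  set FA := hA.toFinset
  set FB := hB.toFinset
  have hsub : quotientSet (f L' L) ⊆ ↑(Finset.image₂ f FA FB) := by
    rintro K ⟨w, -, rfl⟩
    rw [hf]
    simp only [Finset.coe_image₂]
    exact Set.mem_image2_of_mem
      (by simpa [FA] using leftQuotient_mem_aux L' w)
      (by simpa [FB] using leftQuotient_mem_aux L w)
  have hfin : (quotientSet (f L' L)).Finite :=
    Set.Finite.subset (Finset.image₂ f FA FB).finite_toSet hsub
  refine ⟨hfin, ?_⟩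
  calc (quotientSet (f L' L)).ncard
      ≤ (↑(Finset.image₂ f FA FB) : Set (Language α)).ncard :=
        Set.ncard_le_ncard hsub (Finset.image₂ f FA FB).finite_toSet
    _ = (Finset.image₂ f FA FB).card := Set.ncard_coe_finset _
    _ ≤ FA.card * FB.card := Finset.card_image₂_le _ _ _
    _ ≤ (m + 1) * (n + 1) := by
        have h1 : FA.card ≤ m + 1 := by
          rw [← Set.ncard_coe_finset, Set.Finite.coe_toFinset]
          exact le_trans (Set.ncard_union_le _ _) (by simp [hL'.2])
        have h2 : FB.card ≤ n + 1 := by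
          rw [← Set.ncard_coe_finset, Set.Finite.coe_toFinset]
          exact le_trans (Set.ncard_union_le _ _) (by simp [hL.2])
        exact Nat.mul_le_mul h1 h2

end Aux

/-- unrestricted upper bounds for union and symmetric difference. -/
theorem union_symmDiff_upper_bound {α : Type*} (m n : ℕ) (hm : 3 ≤ m) (hn : 3 ≤ n)
    (L' L : Language α) (hL' : HasComplexity L' m) (hL : HasComplexity L n) :
    ((quotientSet (L' ⊔ L)).Finite ∧
      (quotientSet (L' ⊔ L)).ncard ≤ (m + 1) * (n + 1)) ∧
    ((quotientSet ((L' \ L) ⊔ (L \ L'))).Finite ∧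
      (quotientSet ((L' \ L) ⊔ (L \ L'))).ncard ≤ (m + 1) * (n + 1)) := by
  constructor
  · exact key_bound L' L hL' hL (· ⊔ ·) (fun w => rfl)
  · exact key_bound L' L hL' hL (fun M N => (M \ N) ⊔ (N \ M)) (fun w => rfl)
end

section
/- For all m, n ≥ 3 there exist regular languages L' and L over the same two-letter alphabet such that L' has quotient complexity m, L has quotient complexity n, and κ(L' ∩ L) = m·n. -/
section Aux

/-- If the alphabet of `L` is everything, the quotient set is the range of
quotients over all words; if moreover the quotient by `w` only depends on a
surjective invariant `f w` with values in a fintype, and the resulting family of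
quotients is injective, the complexity is the cardinality of the fintype. -/
lemma hasComplexity_of_range {α β : Type*} [Fintype β] {L : Language α}
    (h : alphabetOf L = Set.univ) (f : List α → β) (Q : β → Language α)
    (hq : ∀ w, leftQuotient L w = Q (f w)) (hs : Function.Surjective f)
    (hinj : Function.Injective Q) :
    HasComplexity L (Fintype.card β) := by
  have hqs : quotientSet L = Set.range Q := by
    ext K
    constructor
    · rintro ⟨w, -, rfl⟩; exact ⟨f w, (hq w).symm⟩
    · rintro ⟨b, rfl⟩
      obtain ⟨w, rfl⟩ := hs b
      exact ⟨w, by simp [h], (hq w).symm⟩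
  refine ⟨hqs ▸ Set.finite_range Q, ?_⟩
  rw [hqs, ← Set.image_univ, Set.ncard_image_of_injective _ hinj, Set.ncard_univ,
    Nat.card_eq_fintype_card]

/-- The first witness language: words with number of `0`s divisible by `m`. -/
def countLang (a : Fin 2) (m : ℕ) : Language (Fin 2) :=
  {x | ((x.count a : ℕ) : ZMod m) = 0}

lemma mem_countLang {a : Fin 2} {m : ℕ} {x : List (Fin 2)} :
    x ∈ countLang a m ↔ ((x.count a : ℕ) : ZMod m) = 0 := Iff.rfl

lemma mem_alphabetOf' {α : Type*} {L : Language α} {a : α} :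
    a ∈ alphabetOf L ↔ ∃ u v : List α, u ++ [a] ++ v ∈ L := Iff.rfl

lemma count_canon0 (j k : ℕ) :
    (List.replicate j (0 : Fin 2) ++ List.replicate k 1).count 0 = j := by
  simp [List.count_append, List.count_replicate]

lemma count_canon1 (j k : ℕ) :
    (List.replicate j (0 : Fin 2) ++ List.replicate k 1).count 1 = k := by
  simp [List.count_append, List.count_replicate]

lemma split_canon0 (j k : ℕ) (hj : 1 ≤ j) :
    List.replicate j (0 : Fin 2) ++ List.replicate k 1 =
      [] ++ [0] ++ (List.replicate (j - 1) 0 ++ List.replicate k 1) := by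
  conv_lhs => rw [show j = (j - 1) + 1 by omega, List.replicate_succ]
  simp

lemma split_canon1 (j k : ℕ) (hk : 1 ≤ k) :
    List.replicate j (0 : Fin 2) ++ List.replicate k 1 =
      List.replicate j 0 ++ [1] ++ List.replicate (k - 1) 1 := by
  conv_lhs => rw [show k = (k - 1) + 1 by omega, List.replicate_succ]
  simp

lemma alphabet_univ (K : Language (Fin 2)) (m n : ℕ) (hm : 1 ≤ m) (hn : 1 ≤ n)
    (hK : List.replicate m (0 : Fin 2) ++ List.replicate n 1 ∈ K) :
    alphabetOf K = Set.univ := by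
  have h0 : (0 : Fin 2) ∈ alphabetOf K :=
    mem_alphabetOf'.mpr ⟨[], List.replicate (m - 1) 0 ++ List.replicate n 1,
      by rw [← split_canon0 m n hm]; exact hK⟩
  have h1 : (1 : Fin 2) ∈ alphabetOf K :=
    mem_alphabetOf'.mpr ⟨List.replicate m 0, List.replicate (n - 1) 1,
      by rw [← split_canon1 m n hn]; exact hK⟩
  apply Set.eq_univ_of_forall
  intro a
  fin_cases a
  exacts [h0, h1]

lemma quot_countLang (a : Fin 2) (m : ℕ) (w : List (Fin 2)) :
    leftQuotient (countLang a m) w =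
      {x | ((w.count a : ℕ) : ZMod m) + ((x.count a : ℕ) : ZMod m) = 0} := by
  ext x
  show (((w ++ x).count a : ℕ) : ZMod m) = 0 ↔ _
  rw [List.count_append, Nat.cast_add]
  exact Iff.rfl

lemma quot_inter (m n : ℕ) (w : List (Fin 2)) :
    leftQuotient (countLang 0 m ⊓ countLang 1 n) w =
      {x | ((w.count 0 : ℕ) : ZMod m) + ((x.count 0 : ℕ) : ZMod m) = 0 ∧
           ((w.count 1 : ℕ) : ZMod n) + ((x.count 1 : ℕ) : ZMod n) = 0} := by
  ext x
  show (((w ++ x).count 0 : ℕ) : ZMod m) = 0 ∧ (((w ++ x).count 1 : ℕ) : ZMod n) = 0 ↔ _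
  rw [List.count_append, List.count_append, Nat.cast_add, Nat.cast_add]
  exact Iff.rfl

end Aux

/-- the bound `m·n` for intersection is tight over a common two-letter
alphabet. -/
theorem intersection_tight (m n : ℕ) (hm : 3 ≤ m) (hn : 3 ≤ n) :
    ∃ L' L : Language (Fin 2),
      alphabetOf L' = alphabetOf L ∧ (alphabetOf L').ncard = 2 ∧
      HasComplexity L' m ∧ HasComplexity L n ∧
      HasComplexity (L' ⊓ L) (m * n) := by
  haveI : NeZero m := ⟨by omega⟩
  haveI : NeZero n := ⟨by omega⟩
  have hwm : List.replicate m (0 : Fin 2) ++ List.replicate n 1 ∈ countLang 0 m :=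
    mem_countLang.mpr (by rw [count_canon0]; exact ZMod.natCast_self m)
  have hwn : List.replicate m (0 : Fin 2) ++ List.replicate n 1 ∈ countLang 1 n :=
    mem_countLang.mpr (by rw [count_canon1]; exact ZMod.natCast_self n)
  have ha' := alphabet_univ (countLang 0 m) m n (by omega) (by omega) hwm
  have ha := alphabet_univ (countLang 1 n) m n (by omega) (by omega) hwn
  have hai := alphabet_univ (countLang 0 m ⊓ countLang 1 n) m n (by omega) (by omega) ⟨hwm, hwn⟩
  refine ⟨countLang 0 m, countLang 1 n, by rw [ha', ha], by rw [ha']; simp [Set.ncard_univ], ?_, ?_, ?_⟩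
  · -- complexity of L'
    have := hasComplexity_of_range (β := ZMod m) ha'
      (fun w => ((w.count 0 : ℕ) : ZMod m))
      (fun r => {x | r + ((x.count 0 : ℕ) : ZMod m) = 0})
      (fun w => quot_countLang 0 m w)
      (fun r => by
        obtain ⟨k, hk⟩ := ZMod.natCast_zmod_surjective r
        exact ⟨List.replicate k 0, by simpa [List.count_replicate] using hk⟩)
      (fun r r' h => by
        have hss : ({x | r + ((x.count 0 : ℕ) : ZMod m) = 0} : Language (Fin 2)) =
            {x | r' + ((x.count 0 : ℕ) : ZMod m) = 0} := h
        obtain ⟨k, hk⟩ := ZMod.natCast_zmod_surjective (-r)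
        have h1 : List.replicate k (0 : Fin 2) ∈
            ({x | r + ((x.count 0 : ℕ) : ZMod m) = 0} : Language (Fin 2)) := by
          simp [List.count_replicate, hk]
        rw [hss] at h1
        have h2 : r' + -r = 0 := by simpa [List.count_replicate, hk] using h1
        linear_combination -h2)
    simpa [ZMod.card] using this
  · -- complexity of L
    have := hasComplexity_of_range (β := ZMod n) ha
      (fun w => ((w.count 1 : ℕ) : ZMod n))
      (fun r => {x | r + ((x.count 1 : ℕ) : ZMod n) = 0})
      (fun w => quot_countLang 1 n w)
      (fun r => by
        obtain ⟨k, hk⟩ := ZMod.natCast_zmod_surjective r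
        exact ⟨List.replicate k 1, by simpa [List.count_replicate] using hk⟩)
      (fun r r' h => by
        have hss : ({x | r + ((x.count 1 : ℕ) : ZMod n) = 0} : Language (Fin 2)) =
            {x | r' + ((x.count 1 : ℕ) : ZMod n) = 0} := h
        obtain ⟨k, hk⟩ := ZMod.natCast_zmod_surjective (-r)
        have h1 : List.replicate k (1 : Fin 2) ∈
            ({x | r + ((x.count 1 : ℕ) : ZMod n) = 0} : Language (Fin 2)) := by
          simp [List.count_replicate, hk]
        rw [hss] at h1
        have h2 : r' + -r = 0 := by simpa [List.count_replicate, hk] using h1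
        linear_combination -h2)
    simpa [ZMod.card] using this
  · -- complexity of the intersection
    have := hasComplexity_of_range (β := ZMod m × ZMod n) hai
      (fun w => (((w.count 0 : ℕ) : ZMod m), ((w.count 1 : ℕ) : ZMod n)))
      (fun p => {x | p.1 + ((x.count 0 : ℕ) : ZMod m) = 0 ∧
        p.2 + ((x.count 1 : ℕ) : ZMod n) = 0})
      (fun w => quot_inter m n w)
      (fun p => by
        obtain ⟨j, hj⟩ := ZMod.natCast_zmod_surjective p.1
        obtain ⟨k, hk⟩ := ZMod.natCast_zmod_surjective p.2
        refine ⟨List.replicate j 0 ++ List.replicate k 1, ?_⟩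
        show (_, _) = p
        rw [count_canon0, count_canon1, hj, hk])
      (fun p p' h => by
        have hss : ({x | p.1 + ((x.count 0 : ℕ) : ZMod m) = 0 ∧
              p.2 + ((x.count 1 : ℕ) : ZMod n) = 0} : Language (Fin 2)) =
            {x | p'.1 + ((x.count 0 : ℕ) : ZMod m) = 0 ∧
              p'.2 + ((x.count 1 : ℕ) : ZMod n) = 0} := h
        obtain ⟨j, hj⟩ := ZMod.natCast_zmod_surjective (-p.1)
        obtain ⟨k, hk⟩ := ZMod.natCast_zmod_surjective (-p.2)
        have h1 : List.replicate j (0 : Fin 2) ++ List.replicate k 1 ∈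
            ({x | p.1 + ((x.count 0 : ℕ) : ZMod m) = 0 ∧
              p.2 + ((x.count 1 : ℕ) : ZMod n) = 0} : Language (Fin 2)) := by
          constructor
          · rw [count_canon0, hj]; ring
          · rw [count_canon1, hk]; ring
        rw [hss] at h1
        obtain ⟨h2, h3⟩ := h1
        rw [count_canon0, hj] at h2
        rw [count_canon1, hk] at h3
        exact Prod.ext (by linear_combination -h2) (by linear_combination -h3))
    simpa [ZMod.card] using this
end

section
/- Let Q' and Q be finite sets, σ an alphabet, δ' : Q' → σ → Q' and δ : Q → σ → Q transition functions, q₀' ∈ Q' an initial state with a unique final state f' ∈ Q' satisfying f' ≠ q₀', q₀ ∈ Q an initial state, and F ⊆ Q final states. Assume each DFA is minimal (every state is reachable from the initial state and distinct states are distinguishable by some word), and assume that for every letter a ∈ σ the maps δ'(·, a) : Q' → Q' and δ(·, a) : Q → Q are bijections (i.e., the transition semigroups are groups). Consider the subset construction for the product NFA: states are subsets X of the disjoint union Q' ⊕ Q; the initial subset is {q₀'}; and the transition of X under a letter a is Y ∪ {q₀ if f' ∈ Y}, where Y is the image of X under δ'(·,a) on the Q'-part and δ(·,a) on the Q-part.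 Call a subset reachable if some word maps the initial subset to it. If every singleton {p'} with p' ∈ Q' \ {f'} is reachable and every subset {q₀', q} with q ∈ Q is reachable, then every subset of the form {p'} ∪ S with p' ∈ Q' \ {f'} and S ⊆ Q is reachable, and every subset of the form {f', q₀} ∪ S with S ⊆ Q \ {q₀} is reachable. -/
/-- One step of the subset construction for the product NFA of two DFAs: apply the letter
componentwise, then add the initial state `q₀` of the second DFA whenever the resulting
subset contains the final state `f'` of the first DFA (the ε-transition). -/
def prodStep {Q' Q σ : Type*} (δ' : Q' → σ → Q') (δ : Q → σ → Q) (f' : Q') (q₀ : Q)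
    (X : Set (Q' ⊕ Q)) (a : σ) : Set (Q' ⊕ Q) :=
  (Sum.map (fun p => δ' p a) (fun q => δ q a)) '' X ∪
    {x | x = Sum.inr q₀ ∧ Sum.inl f' ∈ (Sum.map (fun p => δ' p a) (fun q => δ q a)) '' X}

/-- A subset is reachable in the subset construction if some word maps the initial
subset `{q₀'}` to it. -/
def prodReachable {Q' Q σ : Type*} (δ' : Q' → σ → Q') (δ : Q → σ → Q)
    (q₀' f' : Q') (q₀ : Q) (X : Set (Q' ⊕ Q)) : Prop :=
  ∃ w : List σ, w.foldl (prodStep δ' δ f' q₀) {Sum.inl q₀'} = X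

/-!
The subset construction commutes with unions, and on the part `Sum.inr '' S` of a subset it is
just the action of the second DFA. Hence running a word `v` from `{q₀'} ∪ T` yields the run of `v`
from `{q₀'}` together with the image of `T` under `v`. Choose `v = wp ++ wz`, where `wp` reaches
`{q₀', q}` and `wz` reaches `{p'}`: from `{q₀'}` it reaches `{p', q·wz}`. Since letters act on `Q`
by permutations, `q` can be chosen with `q·wz` any prescribed `q₁ ∈ S` and `T` as the preimage of
`S \ {q₁}`, so induction on `|S|` gives all sets `{p'} ∪ S`. Finally, since `f'` is reachable from
`q₀' ≠ f'`, some letter `a` maps some `p ≠ f'` to `f'`, and `a` takes `{p} ∪ T` to `{f', q₀} ∪ T·a`.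
-/

section SubsetConstruction

variable {Q' Q σ : Type*} {δ' : Q' → σ → Q'} {δ : Q → σ → Q} {q₀' f' : Q'} {q₀ : Q}

theorem prodStep_union (X Y : Set (Q' ⊕ Q)) (a : σ) :
    prodStep δ' δ f' q₀ (X ∪ Y) a = prodStep δ' δ f' q₀ X a ∪ prodStep δ' δ f' q₀ Y a := by
  ext x
  simp only [prodStep, Set.image_union, Set.mem_union, Set.mem_ofPred_eq]
  tauto

theorem prodStep_image_inr (S : Set Q) (a : σ) :
    prodStep δ' δ f' q₀ (Sum.inr '' S) a = Sum.inr '' ((δ · a) '' S) := by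
  ext x
  simp [prodStep]

theorem prodStep_singleton_inl_of_eq {p : Q'} {a : σ} (h : δ' p a = f') :
    prodStep δ' δ f' q₀ {Sum.inl p} a = {Sum.inl f', Sum.inr q₀} := by
  ext x
  simp [prodStep, h, or_comm]

theorem foldl_prodStep_union (w : List σ) (X Y : Set (Q' ⊕ Q)) :
    w.foldl (prodStep δ' δ f' q₀) (X ∪ Y) =
      w.foldl (prodStep δ' δ f' q₀) X ∪ w.foldl (prodStep δ' δ f' q₀) Y := by
  induction w generalizing X Y with
  | nil => rfl
  | cons a w ih => simp only [List.foldl_cons, prodStep_union, ih]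

theorem foldl_prodStep_image_inr (w : List σ) (S : Set Q) :
    w.foldl (prodStep δ' δ f' q₀) (Sum.inr '' S) = Sum.inr '' ((w.foldl δ ·) '' S) := by
  induction w generalizing S with
  | nil => simp
  | cons a w ih =>
    rw [List.foldl_cons, prodStep_image_inr, ih]
    simp only [Set.image_image, List.foldl_cons]

theorem foldl_prodStep_union_image_inr (w : List σ) (X : Set (Q' ⊕ Q)) (S : Set Q) :
    w.foldl (prodStep δ' δ f' q₀) (X ∪ Sum.inr '' S) =
      w.foldl (prodStep δ' δ f' q₀) X ∪ Sum.inr '' ((w.foldl δ ·) '' S) := by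
  rw [foldl_prodStep_union, foldl_prodStep_image_inr]

theorem prodReachable.union_image_inr {X Y : Set (Q' ⊕ Q)} {T : Set Q} {w : List σ}
    (hT : prodReachable δ' δ q₀' f' q₀ (Y ∪ Sum.inr '' T))
    (hw : w.foldl (prodStep δ' δ f' q₀) Y = X) :
    prodReachable δ' δ q₀' f' q₀ (X ∪ Sum.inr '' ((w.foldl δ ·) '' T)) := by
  obtain ⟨v, hv⟩ := hT
  exact ⟨v ++ w, by rw [List.foldl_append, hv, foldl_prodStep_union_image_inr, hw]⟩

end SubsetConstruction

theorem bijective_foldl {Q σ : Type*} {δ : Q → σ → Q}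
    (hbij : ∀ a : σ, Function.Bijective (δ · a)) (w : List σ) :
    Function.Bijective (w.foldl δ ·) := by
  induction w with
  | nil => exact Function.bijective_id
  | cons a w ih => exact ih.comp (hbij a)

theorem exists_ne_and_eq_of_foldl_eq {Q σ : Type*} {δ : Q → σ → Q} {p f : Q} (hp : p ≠ f)
    {w : List σ} (hw : w.foldl δ p = f) : ∃ r a, r ≠ f ∧ δ r a = f := by
  induction w generalizing p with
  | nil => exact absurd hw hp
  | cons a w ih =>
    by_cases h : δ p a = f
    · exact ⟨p, a, hp, h⟩
    · exact ih h hw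

theorem prodReachable_inl_union_image_inr {Q' Q σ : Type*} {δ' : Q' → σ → Q'}
    {δ : Q → σ → Q} {q₀' f' : Q'} {q₀ : Q} (hf : f' ≠ q₀')
    (hbij : ∀ a : σ, Function.Bijective (δ · a))
    (hsingle : ∀ p' : Q', p' ≠ f' → prodReachable δ' δ q₀' f' q₀ {Sum.inl p'})
    (hpair : ∀ q : Q, prodReachable δ' δ q₀' f' q₀ {Sum.inl q₀', Sum.inr q})
    {S : Set Q} (hS : S.Finite) {p' : Q'} (hp : p' ≠ f') :
    prodReachable δ' δ q₀' f' q₀ ({Sum.inl p'} ∪ Sum.inr '' S) := by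
  induction hn : S.ncard generalizing S p' with
  | zero =>
    obtain rfl : S = ∅ := (Set.ncard_eq_zero hS).1 hn
    simpa using hsingle p' hp
  | succ n ih =>
    obtain ⟨q₁, hq₁⟩ := Set.nonempty_of_ncard_ne_zero (s := S) (by omega)
    obtain ⟨wz, hwz⟩ := hsingle p' hp
    obtain ⟨q, hq : wz.foldl δ q = q₁⟩ := (bijective_foldl hbij wz).2 q₁
    obtain ⟨wp, hwp⟩ := hpair q
    have hrun : (wp ++ wz).foldl (prodStep δ' δ f' q₀) {Sum.inl q₀'} =
        {Sum.inl p'} ∪ Sum.inr '' {q₁} := by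
      rw [List.foldl_append, hwp, Set.insert_eq, ← Set.image_singleton (f := Sum.inr),
        foldl_prodStep_union_image_inr, hwz, Set.image_singleton, hq]
    have hg := bijective_foldl hbij (wp ++ wz)
    set T := ((wp ++ wz).foldl δ ·) ⁻¹' (S \ {q₁})
    have hT : T.ncard = n := by
      rw [Set.ncard_preimage_of_injective_subset_range hg.injective
        (hg.surjective.range_eq ▸ Set.subset_univ _), Set.ncard_sdiff_singleton_of_mem hq₁, hn,
        Nat.add_sub_cancel]
    have := (ih (hS.sdiff.preimage hg.injective.injOn) hf.symm hT).union_image_inr hrun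
    rwa [Set.image_preimage_eq _ hg.surjective, Set.union_assoc, ← Set.image_union,
      Set.union_sdiff_cancel (Set.singleton_subset_iff.2 hq₁)] at this

theorem davies_reachability_general {Q' Q σ : Type*} [Fintype Q]
    (δ' : Q' → σ → Q') (δ : Q → σ → Q)
    (q₀' f' : Q') (hf : f' ≠ q₀') (q₀ : Q)
    (hreach' : ∀ p : Q', ∃ w : List σ, w.foldl δ' q₀' = p)
    (hbij : ∀ a : σ, Function.Bijective fun q => δ q a)
    (hsingle : ∀ p' : Q', p' ≠ f' → prodReachable δ' δ q₀' f' q₀ {Sum.inl p'})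
    (hpair : ∀ q : Q, prodReachable δ' δ q₀' f' q₀ {Sum.inl q₀', Sum.inr q}) :
    (∀ p' : Q', p' ≠ f' → ∀ S : Set Q,
      prodReachable δ' δ q₀' f' q₀ ({Sum.inl p'} ∪ Sum.inr '' S)) ∧
    (∀ S : Set Q, q₀ ∉ S →
      prodReachable δ' δ q₀' f' q₀ ({Sum.inl f', Sum.inr q₀} ∪ Sum.inr '' S)) := by
  have hmixed : ∀ p' : Q', p' ≠ f' → ∀ S : Set Q,
      prodReachable δ' δ q₀' f' q₀ ({Sum.inl p'} ∪ Sum.inr '' S) := fun p' hp S =>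
    prodReachable_inl_union_image_inr hf hbij hsingle hpair S.toFinite hp
  refine ⟨hmixed, fun S _ => ?_⟩
  obtain ⟨w, hw⟩ := hreach' f'
  obtain ⟨p, a, hp, ha⟩ := exists_ne_and_eq_of_foldl_eq hf.symm hw
  have := (hmixed p hp ((δ · a) ⁻¹' S)).union_image_inr (w := [a])
    (prodStep_singleton_inl_of_eq ha)
  simp only [List.foldl_cons, List.foldl_nil] at this
  rwa [Set.image_preimage_eq _ (hbij a).surjective] at this

/-- Sylvie Davies' lemma: for the product of two minimal DFAs whose
transition monoids are groups, if all singletons `{p'}` (`p' ≠ f'`) and all pairs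
`{q₀', q}` are reachable in the subset construction, then all subsets
`{p'} ∪ S` (`p' ≠ f'`, `S ⊆ Q`) and `{f', q₀} ∪ S` (`S ⊆ Q \ {q₀}`) are reachable. -/
theorem davies_reachability {Q' Q σ : Type*} [Fintype Q'] [Fintype Q]
    (δ' : Q' → σ → Q') (δ : Q → σ → Q)
    (q₀' f' : Q') (hf : f' ≠ q₀') (q₀ : Q) (F : Set Q)
    (hreach' : ∀ p : Q', ∃ w : List σ, w.foldl δ' q₀' = p)
    (hdist' : ∀ p q : Q', p ≠ q →
      ∃ w : List σ, ¬ ((w.foldl δ' p = f') ↔ (w.foldl δ' q = f')))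
    (hreach : ∀ p : Q, ∃ w : List σ, w.foldl δ q₀ = p)
    (hdist : ∀ p q : Q, p ≠ q →
      ∃ w : List σ, ¬ ((w.foldl δ p ∈ F) ↔ (w.foldl δ q ∈ F)))
    (hbij' : ∀ a : σ, Function.Bijective fun p => δ' p a)
    (hbij : ∀ a : σ, Function.Bijective fun q => δ q a)
    (hsingle : ∀ p' : Q', p' ≠ f' → prodReachable δ' δ q₀' f' q₀ {Sum.inl p'})
    (hpair : ∀ q : Q, prodReachable δ' δ q₀' f' q₀ {Sum.inl q₀', Sum.inr q}) :
    (∀ p' : Q', p' ≠ f' → ∀ S : Set Q,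
      prodReachable δ' δ q₀' f' q₀ ({Sum.inl p'} ∪ Sum.inr '' S)) ∧
    (∀ S : Set Q, q₀ ∉ S →
      prodReachable δ' δ q₀' f' q₀ ({Sum.inl f', Sum.inr q₀} ∪ Sum.inr '' S)) :=
  davies_reachability_general δ' δ q₀' f' hf q₀ hreach' hbij hsingle hpair
end

section
/- For all m, n ≥ 3 there exist right ideals L' and L with quotient complexities m and n, with Σ_{L'} \ Σ_L ≠ ∅, such that κ(L' \ L) = m·n + m; and there exist right ideals L' and L with quotient complexities m and n such that κ(L' ∩ L) = m·n. -/
namespace Aux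
abbrev F := Fin 5

def RI (S : Set F) (a : F) (k : ℕ) : Language F :=
  {w | (∀ x ∈ w, x ∈ S) ∧ k ≤ w.count a}

lemma mem_RI {S : Set F} {a k w} : w ∈ RI S a k ↔ (∀ x ∈ w, x ∈ S) ∧ k ≤ w.count a := Iff.rfl

lemma RI_alpha (S : Set F) (a : F) (k : ℕ) (ha : a ∈ S) : alphabetOf (RI S a k) = S := by
  ext s
  constructor
  · rintro ⟨u, v, ⟨hall, -⟩⟩
    exact hall s (by simp)
  · intro hs
    refine ⟨List.replicate k a, [], ⟨?_, ?_⟩⟩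
    · intro x hx
      simp only [List.append_nil, List.mem_append, List.mem_replicate, List.mem_singleton] at hx
      rcases hx with ⟨-, rfl⟩ | rfl <;> assumption
    · simp [List.count_append, List.count_replicate_self]

lemma RI_ideal (S : Set F) (a : F) (k : ℕ) (ha : a ∈ S) : IsRightIdeal (RI S a k) := by
  constructor
  · exact ⟨List.replicate k a, fun x hx => (List.eq_of_mem_replicate hx) ▸ ha, by simp⟩
  · rw [RI_alpha S a k ha]
    ext w
    constructor
    · rintro ⟨u, hu, v, hv, rfl⟩
      refine ⟨?_, ?_⟩
      · intro x hx
        rcases List.mem_append.1 hx with h | h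
        · exact hu.1 x h
        · exact hv x h
      · rw [List.count_append]; exact le_trans hu.2 (Nat.le_add_right _ _)
    · intro hw
      exact ⟨w, hw, [], by simp [starOf], by simp⟩

lemma RI_quot (S : Set F) (a : F) (k : ℕ) {w : List F} (hw : ∀ x ∈ w, x ∈ S) :
    leftQuotient (RI S a k) w = RI S a (k - w.count a) := by
  ext x
  simp only [leftQuotient, Set.mem_setOf_eq, mem_RI, List.count_append, List.forall_mem_append]
  constructor
  · rintro ⟨⟨-, h2⟩, h3⟩; exact ⟨h2, by omega⟩
  · rintro ⟨h2, h3⟩; exact ⟨⟨hw, h2⟩, by omega⟩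

lemma RI_inj {S : Set F} {a : F} (ha : a ∈ S) {i j : ℕ} (h : RI S a i = RI S a j) : i = j := by
  have h1 : List.replicate i a ∈ RI S a i :=
    ⟨fun x hx => (List.eq_of_mem_replicate hx) ▸ ha, by simp [List.count_replicate_self]⟩
  have h2 : List.replicate j a ∈ RI S a j :=
    ⟨fun x hx => (List.eq_of_mem_replicate hx) ▸ ha, by simp [List.count_replicate_self]⟩
  rw [h] at h1
  rw [← h] at h2
  have := h1.2
  have := h2.2
  simp [List.count_replicate_self] at *
  omega

lemma RI_quotSet (S : Set F) (a : F) (k : ℕ) (ha : a ∈ S) :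
    quotientSet (RI S a k) = Set.range (fun i : Fin (k+1) => RI S a i) := by
  ext K
  simp only [quotientSet, Set.mem_setOf_eq, Set.mem_range]
  constructor
  · rintro ⟨w, hw, rfl⟩
    rw [RI_alpha S a k ha] at hw
    exact ⟨⟨k - w.count a, by omega⟩, (RI_quot S a k hw).symm⟩
  · rintro ⟨⟨i, hi⟩, rfl⟩
    refine ⟨List.replicate (k - i) a, ?_, ?_⟩
    · intro x hx
      rw [RI_alpha S a k ha, List.eq_of_mem_replicate hx]; exact ha
    · rw [RI_quot S a k (fun x hx => (List.eq_of_mem_replicate hx) ▸ ha)]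
      simp only [List.count_replicate_self]
      have h2 : k - (k - i) = i := by omega
      rw [h2]

lemma RI_complexity (S : Set F) (a : F) (k : ℕ) (ha : a ∈ S) :
    HasComplexity (RI S a k) (k + 1) := by
  have hinj : Function.Injective (fun i : Fin (k+1) => RI S a i) := by
    intro i j h
    exact Fin.ext (RI_inj ha h)
  rw [HasComplexity, RI_quotSet S a k ha]
  constructor
  · exact Set.finite_range _
  · rw [← Set.image_univ, Set.ncard_image_of_injective _ hinj, Set.ncard_univ]
    simp

def W2 : Set F := {0, 1}
def W3 : Set F := {0, 1, 2}

def RI2 (p q : ℕ) : Language F :=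
  {w | (∀ x ∈ w, x ∈ W2) ∧ p ≤ w.count 0 ∧ q ≤ w.count 1}

lemma mem_RI2 {p q w} : w ∈ RI2 p q ↔ (∀ x ∈ w, x ∈ W2) ∧ p ≤ w.count 0 ∧ q ≤ w.count 1 := Iff.rfl

lemma inter_eq (p q : ℕ) : RI W2 1 q ⊓ RI W2 0 p = RI2 p q := by
  ext w
  constructor
  · rintro ⟨⟨h1, h2⟩, ⟨h3, h4⟩⟩; exact ⟨h1, h4, h2⟩
  · rintro ⟨h1, h2, h3⟩; exact ⟨⟨h1, h3⟩, ⟨h1, h2⟩⟩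

/-- canonical witness -/
def witW (p q : ℕ) : List F := List.replicate p 0 ++ List.replicate q 1

lemma witW_mem (p q : ℕ) : ∀ x ∈ witW p q, x ∈ W2 := by
  intro x hx
  rcases List.mem_append.1 hx with h | h <;>
    rw [List.eq_of_mem_replicate h] <;> simp [W2]

lemma witW_count0 (p q : ℕ) : (witW p q).count 0 = p := by
  simp [witW, List.count_append, List.count_replicate_self, List.count_replicate]

lemma witW_count1 (p q : ℕ) : (witW p q).count 1 = q := by
  simp [witW, List.count_append, List.count_replicate_self, List.count_replicate]

lemma witW_mem_RI2 {p q p' q' : ℕ} : witW p q ∈ RI2 p' q' ↔ p' ≤ p ∧ q' ≤ q := by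
  constructor
  · rintro ⟨-, h2, h3⟩
    rw [witW_count0] at h2; rw [witW_count1] at h3; exact ⟨h2, h3⟩
  · rintro ⟨h2, h3⟩
    exact ⟨witW_mem p q, by rw [witW_count0]; exact h2, by rw [witW_count1]; exact h3⟩

lemma RI2_inj {p q p' q' : ℕ} (h : RI2 p q = RI2 p' q') : p = p' ∧ q = q' := by
  have h1 : witW p q ∈ RI2 p q := witW_mem_RI2.2 ⟨le_refl _, le_refl _⟩
  have h2 : witW p' q' ∈ RI2 p' q' := witW_mem_RI2.2 ⟨le_refl _, le_refl _⟩
  rw [h] at h1; rw [← h] at h2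
  have := witW_mem_RI2.1 h1
  have := witW_mem_RI2.1 h2
  omega

lemma RI2_alpha (p q : ℕ) : alphabetOf (RI2 p q) = W2 := by
  ext s
  constructor
  · rintro ⟨u, v, ⟨hall, -⟩⟩
    exact hall s (by simp)
  · intro hs
    refine ⟨witW p q, [], ⟨?_, ?_, ?_⟩⟩
    · intro x hx
      simp only [List.append_nil, List.mem_append, List.mem_singleton] at hx
      rcases hx with h | rfl
      · exact witW_mem p q x h
      · exact hs
    · simp [List.count_append, witW_count0]
    · simp [List.count_append, witW_count1]

lemma RI2_quot (p q : ℕ) {w : List F} (hw : ∀ x ∈ w, x ∈ W2) :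
    leftQuotient (RI2 p q) w = RI2 (p - w.count 0) (q - w.count 1) := by
  ext y
  simp only [leftQuotient, Set.mem_setOf_eq, mem_RI2, List.count_append, List.forall_mem_append]
  constructor
  · rintro ⟨⟨-, h1⟩, h2, h3⟩; exact ⟨h1, by omega, by omega⟩
  · rintro ⟨h1, h2, h3⟩; exact ⟨⟨hw, h1⟩, by omega, by omega⟩


lemma RI2_quotSet (p q : ℕ) :
    quotientSet (RI2 p q) = Set.range (fun ij : Fin (p+1) × Fin (q+1) => RI2 ij.1 ij.2) := by
  ext K
  simp only [quotientSet, Set.mem_setOf_eq, Set.mem_range]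
  constructor
  · rintro ⟨w, hw, rfl⟩
    rw [RI2_alpha p q] at hw
    exact ⟨(⟨p - w.count 0, by omega⟩, ⟨q - w.count 1, by omega⟩), (RI2_quot p q hw).symm⟩
  · rintro ⟨⟨⟨i, hi⟩, ⟨j, hj⟩⟩, rfl⟩
    refine ⟨witW (p - i) (q - j), ?_, ?_⟩
    · intro x hx
      rw [RI2_alpha p q]; exact witW_mem _ _ x hx
    · rw [RI2_quot p q (witW_mem _ _), witW_count0, witW_count1]
      have e1 : p - (p - i) = i := by omega
      have e2 : q - (q - j) = j := by omega
      rw [e1, e2]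

lemma RI2_complexity (p q : ℕ) : HasComplexity (RI2 p q) ((p+1) * (q+1)) := by
  have hinj : Function.Injective (fun ij : Fin (p+1) × Fin (q+1) => RI2 ij.1 ij.2) := by
    rintro ⟨i, j⟩ ⟨i', j'⟩ h
    obtain ⟨h1, h2⟩ := RI2_inj h
    simp only [Prod.mk.injEq]
    exact ⟨Fin.ext h1, Fin.ext h2⟩
  rw [HasComplexity, RI2_quotSet p q]
  constructor
  · exact Set.finite_range _
  · rw [← Set.image_univ, Set.ncard_image_of_injective _ hinj, Set.ncard_univ]
    simp

def RD (i : ℕ) (s : Option ℕ) : Language F :=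
  {w | (∀ x ∈ w, x ∈ W3) ∧ i ≤ w.count 1 ∧
    ∀ j, s = some j → (∀ x ∈ w, x ∈ W2) → w.count 0 < j}

lemma mem_RD {i s w} : w ∈ RD i s ↔ (∀ x ∈ w, x ∈ W3) ∧ i ≤ w.count 1 ∧
    ∀ j, s = some j → (∀ x ∈ w, x ∈ W2) → w.count 0 < j := Iff.rfl

lemma diff_eq (k j : ℕ) : RI W3 1 k \ RI W2 0 j = RD k (some j) := by
  ext w
  simp only [Set.mem_diff, mem_RI, mem_RD]
  constructor
  · rintro ⟨⟨h1, h2⟩, h3⟩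
    refine ⟨h1, h2, ?_⟩
    rintro j' hj' hW2
    obtain rfl : j = j' := Option.some.inj hj'
    by_contra hc
    exact h3 ⟨hW2, by omega⟩
  · rintro ⟨h1, h2, h3⟩
    refine ⟨⟨h1, h2⟩, ?_⟩
    rintro ⟨hW2, hc⟩
    have := h3 j rfl hW2
    omega

def witD (i t : ℕ) : List F := List.replicate i 1 ++ List.replicate t 0
def witC (t : ℕ) : List F := 2 :: List.replicate t 1

lemma witD_W2 (i t : ℕ) : ∀ x ∈ witD i t, x ∈ W2 := by
  intro x hx
  rcases List.mem_append.1 hx with h | h <;>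
    rw [List.eq_of_mem_replicate h] <;> simp [W2]

lemma witD_W3 (i t : ℕ) : ∀ x ∈ witD i t, x ∈ W3 := by
  intro x hx
  rcases List.mem_append.1 hx with h | h <;>
    rw [List.eq_of_mem_replicate h] <;> simp [W3]

lemma witD_count1 (i t : ℕ) : (witD i t).count 1 = i := by
  simp [witD, List.count_append, List.count_replicate_self, List.count_replicate]

lemma witD_count0 (i t : ℕ) : (witD i t).count 0 = t := by
  simp [witD, List.count_append, List.count_replicate_self, List.count_replicate]

lemma witC_W3 (t : ℕ) : ∀ x ∈ witC t, x ∈ W3 := by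
  intro x hx
  rcases List.mem_cons.1 hx with rfl | h
  · simp [W3]
  · rw [List.eq_of_mem_replicate h]; simp [W3]

lemma witC_not_W2 (t : ℕ) : ¬ (∀ x ∈ witC t, x ∈ W2) := by
  intro h
  have h2 := h 2 (by simp [witC])
  simp only [W2, Set.mem_insert_iff, Set.mem_singleton_iff] at h2
  rcases h2 with h2 | h2 <;> exact absurd h2 (by decide)

lemma witC_count1 (t : ℕ) : (witC t).count 1 = t := by
  simp [witC, List.count_cons, List.count_replicate_self]

lemma witD_mem_RD {i t i' : ℕ} {s : Option ℕ} :
    witD i t ∈ RD i' s ↔ i' ≤ i ∧ ∀ j, s = some j → t < j := by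
  rw [mem_RD, witD_count1, witD_count0]
  constructor
  · rintro ⟨-, h2, h3⟩
    exact ⟨h2, fun j hj => h3 j hj (witD_W2 i t)⟩
  · rintro ⟨h2, h3⟩
    exact ⟨witD_W3 i t, h2, fun j hj _ => h3 j hj⟩

lemma witC_mem_RD {t i' : ℕ} {s : Option ℕ} : witC t ∈ RD i' s ↔ i' ≤ t := by
  rw [mem_RD, witC_count1]
  constructor
  · rintro ⟨-, h2, -⟩; exact h2
  · intro h
    exact ⟨witC_W3 t, h, fun j _ hW2 => absurd hW2 (witC_not_W2 t)⟩

lemma RD_inj {i i' : ℕ} {s s' : Option ℕ} (h : RD i s = RD i' s') : i = i' ∧ s = s' := by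
  have hii' : i = i' := by
    have h1 : witC i ∈ RD i s := witC_mem_RD.2 le_rfl
    have h2 : witC i' ∈ RD i' s' := witC_mem_RD.2 le_rfl
    rw [h] at h1; rw [← h] at h2
    have := witC_mem_RD.1 h1
    have := witC_mem_RD.1 h2
    omega
  subst hii'
  refine ⟨rfl, ?_⟩
  have key : ∀ t : ℕ, (∀ j, s = some j → t < j) ↔ (∀ j, s' = some j → t < j) := by
    intro t
    constructor
    · intro ht
      have : witD i t ∈ RD i s := witD_mem_RD.2 ⟨le_rfl, ht⟩
      rw [h] at this
      exact (witD_mem_RD.1 this).2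
    · intro ht
      have : witD i t ∈ RD i s' := witD_mem_RD.2 ⟨le_rfl, ht⟩
      rw [← h] at this
      exact (witD_mem_RD.1 this).2
  cases s with
  | none =>
    cases s' with
    | none => rfl
    | some j' =>
      exfalso
      have := (key j').1 (by simp) j' rfl
      omega
  | some j =>
    cases s' with
    | none =>
      exfalso
      have := (key j).2 (by simp) j rfl
      omega
    | some j' =>
      have h1 := (key j).1
      have h2 := (key j').2
      by_cases hjj' : j = j'
      · rw [hjj']
      · exfalso
        rcases Nat.lt_or_ge j j' with hlt | hge
        · have hl : ∀ j0, some j' = some j0 → j < j0 := by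
            rintro j0 hj0
            obtain rfl : j' = j0 := Option.some.inj hj0
            omega
          have := (key j).2 hl j rfl
          omega
        · have hlt2 : j' < j := by omega
          have hl : ∀ j0, some j = some j0 → j' < j0 := by
            rintro j0 hj0
            obtain rfl : j = j0 := Option.some.inj hj0
            omega
          have := (key j').1 hl j' rfl
          omega

lemma RD_alpha (k j : ℕ) (hj : 2 ≤ j) : alphabetOf (RD k (some j)) = W3 := by
  ext s
  constructor
  · rintro ⟨u, v, hall, -⟩
    exact hall s (by simp)
  · intro hs
    refine ⟨List.replicate k 1, [], ?_, ?_, ?_⟩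
    · intro x hx
      simp only [List.append_nil, List.mem_append, List.mem_singleton] at hx
      rcases hx with h | rfl
      · rw [List.eq_of_mem_replicate h]; simp [W3]
      · exact hs
    · simp [List.count_append, List.count_replicate_self]
    · rintro j' hj' -
      obtain rfl : j = j' := Option.some.inj hj'
      have h0 : (List.replicate k (1 : F)).count 0 = 0 := by
        simp [List.count_replicate]
      have h1 : ([s] : List F).count 0 ≤ 1 := by
        simp [List.count_cons]
        split <;> omega
      simp only [List.append_nil, List.count_append]
      omega

lemma RD_quotA (k j : ℕ) {w : List F} (hw3 : ∀ x ∈ w, x ∈ W3) (hw2 : ∀ x ∈ w, x ∈ W2) :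
    leftQuotient (RD k (some j)) w = RD (k - w.count 1) (some (j - w.count 0)) := by
  ext y
  simp only [leftQuotient, Set.mem_setOf_eq, mem_RD, List.count_append, List.forall_mem_append]
  constructor
  · rintro ⟨⟨-, hy3⟩, h2, h3⟩
    refine ⟨hy3, by omega, ?_⟩
    rintro j' hj' hyW2
    obtain rfl : j - w.count 0 = j' := Option.some.inj hj'
    have := h3 j rfl ⟨hw2, hyW2⟩
    omega
  · rintro ⟨hy3, h2, h3⟩
    refine ⟨⟨hw3, hy3⟩, by omega, ?_⟩
    rintro j' hj' ⟨-, hyW2⟩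
    obtain rfl : j = j' := Option.some.inj hj'
    have := h3 (j - w.count 0) rfl hyW2
    omega

lemma RD_quotB (k j : ℕ) {w : List F} (hw3 : ∀ x ∈ w, x ∈ W3) (hw2 : ¬ ∀ x ∈ w, x ∈ W2) :
    leftQuotient (RD k (some j)) w = RD (k - w.count 1) none := by
  ext y
  simp only [leftQuotient, Set.mem_setOf_eq, mem_RD, List.count_append, List.forall_mem_append]
  constructor
  · rintro ⟨⟨-, hy3⟩, h2, -⟩
    refine ⟨hy3, by omega, ?_⟩
    rintro j' hj'
    exact absurd hj' (by simp)
  · rintro ⟨hy3, h2, -⟩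
    refine ⟨⟨hw3, hy3⟩, by omega, ?_⟩
    rintro j' hj' ⟨hwW2, -⟩
    exact absurd hwW2 hw2

lemma RD_quotSet (k j : ℕ) (hj : 2 ≤ j) :
    quotientSet (RD k (some j)) =
      Set.range (fun p : Fin (k+1) × Option (Fin (j+1)) => RD p.1 (p.2.map Fin.val)) := by
  ext K
  simp only [quotientSet, Set.mem_setOf_eq, Set.mem_range]
  constructor
  · rintro ⟨w, hw, rfl⟩
    rw [RD_alpha k j hj] at hw
    by_cases h2 : ∀ x ∈ w, x ∈ W2
    · exact ⟨(⟨k - w.count 1, by omega⟩, some ⟨j - w.count 0, by omega⟩),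
        (RD_quotA k j hw h2).symm⟩
    · exact ⟨(⟨k - w.count 1, by omega⟩, none), (RD_quotB k j hw h2).symm⟩
  · rintro ⟨⟨⟨i, hi⟩, s⟩, rfl⟩
    cases s with
    | none =>
      refine ⟨witC (k - i), ?_, ?_⟩
      · intro x hx
        rw [RD_alpha k j hj]
        exact witC_W3 _ x hx
      · rw [RD_quotB k j (witC_W3 _) (witC_not_W2 _), witC_count1]
        have e1 : k - (k - i) = i := by omega
        rw [e1]
        rfl
    | some j0 =>
      refine ⟨witD (k - i) (j - j0), ?_, ?_⟩
      · intro x hx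
        rw [RD_alpha k j hj]
        exact witD_W3 _ _ x hx
      · rw [RD_quotA k j (witD_W3 _ _) (witD_W2 _ _), witD_count1, witD_count0]
        have e1 : k - (k - i) = i := by omega
        have e2 : j - (j - (j0 : ℕ)) = j0 := by have := j0.isLt; omega
        rw [e1, e2]
        rfl

lemma RD_complexity (k j : ℕ) (hj : 2 ≤ j) :
    HasComplexity (RD k (some j)) ((k + 1) * (j + 2)) := by
  have hinj : Function.Injective
      (fun p : Fin (k+1) × Option (Fin (j+1)) => RD p.1 (p.2.map Fin.val)) := by
    rintro ⟨i, s⟩ ⟨i', s'⟩ h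
    obtain ⟨h1, h2⟩ := RD_inj h
    have hs : s = s' := Option.map_injective Fin.val_injective h2
    simp only [Prod.mk.injEq]
    exact ⟨Fin.ext h1, hs⟩
  rw [HasComplexity, RD_quotSet k j hj]
  constructor
  · exact Set.finite_range _
  · rw [← Set.image_univ, Set.ncard_image_of_injective _ hinj, Set.ncard_univ]
    simp [Nat.card_eq_fintype_card]

lemma mem_W3_1 : (1 : F) ∈ W3 := by simp [W3]
lemma mem_W2_0 : (0 : F) ∈ W2 := by simp [W2]
lemma mem_W2_1 : (1 : F) ∈ W2 := by simp [W2]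

end Aux

/-- right ideals meeting the bound `m·n + m` for difference
(with `Σ_{L'} \ Σ_L ≠ ∅`) and the bound `m·n` for intersection. -/
theorem right_ideal_difference_intersection_tight (m n : ℕ) (hm : 3 ≤ m) (hn : 3 ≤ n) :
    (∃ L' L : Language (Fin 5), IsRightIdeal L' ∧ IsRightIdeal L ∧
      (alphabetOf L' \ alphabetOf L).Nonempty ∧
      HasComplexity L' m ∧ HasComplexity L n ∧
      HasComplexity (L' \ L) (m * n + m)) ∧
    (∃ L' L : Language (Fin 5), IsRightIdeal L' ∧ IsRightIdeal L ∧
      HasComplexity L' m ∧ HasComplexity L n ∧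
      HasComplexity (L' ⊓ L) (m * n)) := by
  constructor
  · refine ⟨Aux.RI Aux.W3 1 (m-1), Aux.RI Aux.W2 0 (n-1), ?_, ?_, ?_, ?_, ?_, ?_⟩
    · exact Aux.RI_ideal _ _ _ Aux.mem_W3_1
    · exact Aux.RI_ideal _ _ _ Aux.mem_W2_0
    · refine ⟨2, ?_⟩
      rw [Set.mem_diff, Aux.RI_alpha _ _ _ Aux.mem_W3_1, Aux.RI_alpha _ _ _ Aux.mem_W2_0]
      constructor
      · simp [Aux.W3]
      · simp only [Aux.W2, Set.mem_insert_iff, Set.mem_singleton_iff]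
        push_neg
        exact ⟨by decide, by decide⟩
    · have h := Aux.RI_complexity Aux.W3 1 (m-1) Aux.mem_W3_1
      rwa [show m - 1 + 1 = m by omega] at h
    · have h := Aux.RI_complexity Aux.W2 0 (n-1) Aux.mem_W2_0
      rwa [show n - 1 + 1 = n by omega] at h
    · rw [Aux.diff_eq]
      have h := Aux.RD_complexity (m-1) (n-1) (by omega)
      rwa [show (m-1+1) * (n-1+2) = m*n+m by
        rw [show m-1+1 = m by omega, show n-1+2 = n+1 by omega]; ring] at h
  · refine ⟨Aux.RI Aux.W2 1 (m-1), Aux.RI Aux.W2 0 (n-1), ?_, ?_, ?_, ?_, ?_⟩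
    · exact Aux.RI_ideal _ _ _ Aux.mem_W2_1
    · exact Aux.RI_ideal _ _ _ Aux.mem_W2_0
    · have h := Aux.RI_complexity Aux.W2 1 (m-1) Aux.mem_W2_1
      rwa [show m - 1 + 1 = m by omega] at h
    · have h := Aux.RI_complexity Aux.W2 0 (n-1) Aux.mem_W2_0
      rwa [show n - 1 + 1 = n by omega] at h
    · rw [Aux.inter_eq]
      have h := Aux.RI2_complexity (n-1) (m-1)
      rwa [show (n-1+1) * (m-1+1) = m*n by
        rw [show n-1+1 = n by omega, show m-1+1 = m by omega]; ring] at h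
end

section
/- Let L' be a language over a type α and let L be a left ideal, i.e., a nonempty language with Σ_L^*·L = L where Σ_L is the alphabet of L. Then for every word w, the left quotient of the product satisfies w⁻¹(L'·L) = K ∪ (w⁻¹L')·L, where K is either the empty language or equal to v⁻¹L for some suffix v of w. Consequently every left quotient of L'·L has the form K ∪ K''·L with K'' a left quotient of L' and K either empty or a left quotient of L. -/
lemma mem_alphabet_of_mem {α : Type*} {L : Language α} {y : List α} (hy : y ∈ L)
    {a : α} (ha : a ∈ y) : a ∈ alphabetOf L := by
  obtain ⟨s, t, rfl⟩ := List.mem_iff_append.mp ha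
  exact ⟨s, t, by simpa using hy⟩

lemma prepend_mem {α : Type*} {L : Language α} (hL : IsLeftIdeal L)
    {s y : List α} (hs : ∀ a ∈ s, a ∈ alphabetOf L) (hy : y ∈ L) : s ++ y ∈ L := by
  have h : s ++ y ∈ starOf (alphabetOf L) * L :=
    Language.mem_mul.mpr ⟨s, hs, y, hy, rfl⟩
  rwa [hL.2] at h

/-- the quotients of a product by a left ideal have the form
`K ∪ (w⁻¹L')·L` where `K` is empty or a quotient of `L` by a suffix of `w`. -/
theorem product_left_ideal_quotient_form {α : Type*} (L' L : Language α)
    (hL : IsLeftIdeal L) :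
    (∀ w : List α, ∃ K : Language α,
      (K = ⊥ ∨ ∃ u v : List α, w = u ++ v ∧ K = leftQuotient L v) ∧
      leftQuotient (L' * L) w = K ⊔ leftQuotient L' w * L) ∧
    (∀ w : List α, ∃ K K'' : Language α,
      (∃ u : List α, K'' = leftQuotient L' u) ∧
      (K = ⊥ ∨ ∃ v : List α, K = leftQuotient L v) ∧
      leftQuotient (L' * L) w = K ⊔ K'' * L) := by
  classical
  have main : ∀ w : List α, ∃ K : Language α,
      (K = ⊥ ∨ ∃ u v : List α, w = u ++ v ∧ K = leftQuotient L v) ∧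
      leftQuotient (L' * L) w = K ⊔ leftQuotient L' w * L := by
    intro w
    set N : Set ℕ :=
      {n | n ≤ w.length ∧ w.take n ∈ L' ∧ (leftQuotient L (w.drop n)).Nonempty} with hNdef
    -- the backward inclusion, valid always
    have hback : ∀ x : List α, x ∈ leftQuotient L' w * L → x ∈ leftQuotient (L' * L) w := by
      intro x hx
      obtain ⟨p, hp, b, hb, rfl⟩ := Language.mem_mul.mp hx
      show w ++ (p ++ b) ∈ L' * L
      exact Language.mem_mul.mpr ⟨w ++ p, hp, b, hb, by rw [List.append_assoc]⟩
    by_cases hNe : N.Nonempty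
    · have hn₀ := Nat.sInf_mem hNe
      set n₀ := sInf N with hn₀def
      obtain ⟨hn₀le, hn₀L', hn₀ne⟩ := hn₀
      -- quotients by longer suffixes (n ∈ N) are contained in the n₀ quotient
      have hincl : ∀ n ∈ N, ∀ x : List α,
          x ∈ leftQuotient L (w.drop n) → x ∈ leftQuotient L (w.drop n₀) := by
        intro n hn x hx
        have hle : n₀ ≤ n := Nat.sInf_le hn
        set s := (w.drop n₀).take (n - n₀) with hs
        have hdn : w.drop n = List.drop (n - n₀) (w.drop n₀) := by
          rw [List.drop_drop]
          congr 1
          omega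
        have hdecomp : w.drop n₀ = s ++ w.drop n := by
          rw [hdn, hs]
          exact (List.take_append_drop _ _).symm
        obtain ⟨x₀, hx₀⟩ := hn₀ne
        have hx₀' : w.drop n₀ ++ x₀ ∈ L := hx₀
        have hsalpha : ∀ a ∈ s, a ∈ alphabetOf L := by
          intro a ha
          have : a ∈ w.drop n₀ ++ x₀ := by
            refine List.mem_append.mpr (Or.inl ?_)
            rw [hdecomp]
            exact List.mem_append.mpr (Or.inl ha)
          exact mem_alphabet_of_mem hx₀' this
        show w.drop n₀ ++ x ∈ L
        rw [hdecomp, List.append_assoc]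
        exact prepend_mem hL hsalpha hx
      refine ⟨leftQuotient L (w.drop n₀),
        Or.inr ⟨w.take n₀, w.drop n₀, (List.take_append_drop _ _).symm, rfl⟩, ?_⟩
      ext x
      constructor
      · intro hx
        obtain ⟨a, ha, b, hb, hab⟩ := Language.mem_mul.mp hx
        rcases List.append_eq_append_iff.mp hab with ⟨t, hw, hbx⟩ | ⟨p, hap, hxp⟩
        · -- w = a ++ t, b = t ++ x
          have hmem : a.length ∈ N := by
            refine ⟨by rw [hw]; simp, by rw [hw, List.take_left]; exact ha, ⟨x, ?_⟩⟩
            show w.drop a.length ++ x ∈ L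
            rw [hw, List.drop_left]
            exact hbx ▸ hb
          refine Set.mem_union_left _ (hincl a.length hmem x ?_)
          show w.drop a.length ++ x ∈ L
          rw [hw, List.drop_left]
          exact hbx ▸ hb
        · -- a = w ++ p, x = p ++ b
          refine Set.mem_union_right _ (Language.mem_mul.mpr ⟨p, ?_, b, hb, hxp.symm⟩)
          show w ++ p ∈ L'
          rw [← hap]; exact ha
      · intro hx
        rcases hx with hx | hx
        · show w ++ x ∈ L' * L
          refine Language.mem_mul.mpr ⟨w.take n₀, hn₀L', w.drop n₀ ++ x, hx, ?_⟩
          rw [← List.append_assoc, List.take_append_drop]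
        · exact hback x hx
    · refine ⟨⊥, Or.inl rfl, ?_⟩
      ext x
      constructor
      · intro hx
        obtain ⟨a, ha, b, hb, hab⟩ := Language.mem_mul.mp hx
        rcases List.append_eq_append_iff.mp hab with ⟨t, hw, hbx⟩ | ⟨p, hap, hxp⟩
        · exfalso
          apply hNe
          refine ⟨a.length, by rw [hw]; simp, by rw [hw, List.take_left]; exact ha, ⟨x, ?_⟩⟩
          show w.drop a.length ++ x ∈ L
          rw [hw, List.drop_left]
          exact hbx ▸ hb
        · refine Set.mem_union_right _ (Language.mem_mul.mpr ⟨p, ?_, b, hb, hxp.symm⟩)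
          show w ++ p ∈ L'
          rw [← hap]; exact ha
      · intro hx
        rcases hx with hx | hx
        · exact hx.elim
        · exact hback x hx
  refine ⟨main, fun w => ?_⟩
  obtain ⟨K, hK, heq⟩ := main w
  exact ⟨K, leftQuotient L' w, ⟨w, rfl⟩,
    hK.imp id (fun ⟨u, v, _, h⟩ => ⟨v, h⟩), heq⟩
end
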